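/- For every natural numbers n and k, the B-analogue of the Stirling number of the second kind satisfies the exponential generating function identity Σ_{k≥0} Σ_{n≥k} S_B(n,k) (t^n/n!) y^k = e^{(y/2)(e^{2t}−1)} · e^{t} as formal power series. -/

import Mathlib

/-!
Dobinski-type argument. Expanding `(2j+1)^n = Σ_m C(n,m) 2^m j^m` and `j^m = Σ_k S(m,k) j^(k)`
(falling factorials) gives `(2j+1)^n = Σ_k S_B(n,k) 2^k j^(k)`, and `Σ_j j^(k) x^j / j! = x^k e^x`
turns this into `Σ_j (2j+1)^n x^j / j! = e^x Σ_k S_B(n,k) (2x)^k`. Summing the absolutely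
convergent double series `Σ_{j,n} x^j/j! · ((2j+1)t)^n/n!` over `n` first instead gives
`Σ_j x^j/j! · e^{(2j+1)t} = e^t e^{x e^{2t}}`; comparing the two with `x = y/2` yields the theorem.
-/

/-- The Stirling numbers of the second kind. -/
def stirling2 : ℕ → ℕ → ℕ
  | 0, 0 => 1
  | 0, _ + 1 => 0
  | _ + 1, 0 => 0
  | n + 1, k + 1 => (k + 1) * stirling2 n (k + 1) + stirling2 n k

/-- The `B`-analogue of the Stirling numbers of the second kind:
`S_B(n,k) = Σ_{m=k}^{n} 2^{m−k} · binom(n,m) · S(m,k)`. -/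
def stirlingB2 (n k : ℕ) : ℕ :=
  ∑ m ∈ Finset.Icc k n, 2 ^ (m - k) * n.choose m * stirling2 m k

open Finset Nat

theorem stirling2_eq_stirlingSecond : ∀ n k, stirling2 n k = Nat.stirlingSecond n k
  | 0, 0 | 0, _ + 1 | _ + 1, 0 => rfl
  | n + 1, k + 1 => by
    rw [stirling2, stirlingSecond_succ_succ, stirling2_eq_stirlingSecond n (k + 1),
      stirling2_eq_stirlingSecond n k]

theorem mul_descFactorial (j k : ℕ) :
    j * j.descFactorial k = j.descFactorial (k + 1) + k * j.descFactorial k := by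
  rw [Nat.descFactorial_succ, ← add_mul]
  rcases le_or_gt k j with h | h
  · rw [Nat.sub_add_cancel h]
  · simp [Nat.descFactorial_eq_zero_iff_lt.2 h]

theorem pow_eq_sum_stirling2_mul_descFactorial (m j : ℕ) :
    j ^ m = ∑ k ∈ range (m + 1), stirling2 m k * j.descFactorial k := by
  induction m with
  | zero => simp [stirling2]
  | succ m ih =>
    set g : ℕ → ℕ := fun k => k * stirling2 m k * j.descFactorial k
    have shift : ∑ k ∈ range (m + 1), g (k + 1) = ∑ k ∈ range (m + 1), g k := by
      have h := (sum_range_succ' g (m + 1)).symm.trans (sum_range_succ g (m + 1))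
      simpa [g, stirling2_eq_stirlingSecond, stirlingSecond_eq_zero_of_lt] using h
    calc j ^ (m + 1) = ∑ k ∈ range (m + 1), stirling2 m k * (j * j.descFactorial k) := by
          rw [_root_.pow_succ', ih, mul_sum]; exact sum_congr rfl fun k _ => by ring
      _ = ∑ k ∈ range (m + 1), (stirling2 m k * j.descFactorial (k + 1) + g k) := by
          simp_rw [mul_descFactorial]; exact sum_congr rfl fun k _ => by ring
      _ = ∑ k ∈ range (m + 1), stirling2 (m + 1) (k + 1) * j.descFactorial (k + 1) := by
          rw [sum_add_distrib, ← shift, ← sum_add_distrib]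
          exact sum_congr rfl fun k _ => by rw [stirling2]; ring
      _ = _ := by rw [sum_range_succ' _ (m + 1)]; simp [stirling2]

theorem odd_pow_eq_sum_stirlingB2_mul_descFactorial (n j : ℕ) :
    (2 * j + 1) ^ n = ∑ k ∈ range (n + 1), stirlingB2 n k * 2 ^ k * j.descFactorial k := by
  calc (2 * j + 1) ^ n
      = ∑ m ∈ range (n + 1), ∑ k ∈ range (m + 1),
          n.choose m * 2 ^ m * stirling2 m k * j.descFactorial k := by
        rw [add_pow]
        refine sum_congr rfl fun m _ => ?_
        rw [Nat.cast_id, mul_pow, pow_eq_sum_stirling2_mul_descFactorial m j, mul_sum, sum_mul,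
          sum_mul]
        exact sum_congr rfl fun k _ => by ring
    _ = ∑ k ∈ range (n + 1), ∑ m ∈ Icc k n,
          n.choose m * 2 ^ m * stirling2 m k * j.descFactorial k :=
        sum_comm' fun m k => by simp only [mem_range, mem_Icc]; omega
    _ = _ := by
        refine sum_congr rfl fun k _ => ?_
        rw [stirlingB2, sum_mul, sum_mul]
        refine sum_congr rfl fun m hm => ?_
        rw [← pow_sub_mul_pow 2 (mem_Icc.1 hm).1]
        ring

theorem Real.hasSum_pow_div_factorial (x : ℝ) :
    HasSum (fun n : ℕ => x ^ n / n !) (Real.exp x) := by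
  rw [Real.exp_eq_exp_ℝ]
  exact NormedSpace.expSeries_div_hasSum_exp x

theorem hasSum_descFactorial_mul_pow_div_factorial (x : ℝ) (k : ℕ) :
    HasSum (fun j : ℕ => j.descFactorial k * x ^ j / j !) (x ^ k * Real.exp x) := by
  rw [← hasSum_nat_add_iff' k]
  have hhead : ∑ j ∈ range k, (j.descFactorial k * x ^ j / j ! : ℝ) = 0 :=
    sum_eq_zero fun j hj => by simp [Nat.descFactorial_eq_zero_iff_lt.2 (mem_range.1 hj)]
  rw [hhead, sub_zero]
  refine ((Real.hasSum_pow_div_factorial x).mul_left (x ^ k)).congr_fun fun i => ?_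
  have hfac : ((i ! : ℕ) : ℝ) * (i + k).descFactorial k = (i + k)! := by
    exact_mod_cast (by simpa using Nat.factorial_mul_descFactorial (Nat.le_add_left k i))
  rw [← hfac, pow_add]
  field_simp

theorem hasSum_odd_pow_mul_pow_div_factorial (n : ℕ) (x : ℝ) :
    HasSum (fun j : ℕ => (2 * j + 1 : ℝ) ^ n * x ^ j / j !)
      (Real.exp x * ∑ k ∈ range (n + 1), (stirlingB2 n k : ℝ) * (2 * x) ^ k) := by
  have h := hasSum_sum fun k (_ : k ∈ range (n + 1)) =>
    (hasSum_descFactorial_mul_pow_div_factorial x k).mul_left ((stirlingB2 n k : ℝ) * 2 ^ k)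
  have hval : Real.exp x * ∑ k ∈ range (n + 1), (stirlingB2 n k : ℝ) * (2 * x) ^ k
      = ∑ k ∈ range (n + 1), (stirlingB2 n k : ℝ) * 2 ^ k * (x ^ k * Real.exp x) := by
    rw [mul_sum]
    exact sum_congr rfl fun k _ => by ring
  rw [hval]
  refine h.congr_fun fun j => ?_
  have hnat := congrArg (Nat.cast (R := ℝ)) (odd_pow_eq_sum_stirlingB2_mul_descFactorial n j)
  push_cast at hnat
  rw [hnat, sum_mul, sum_div]
  exact sum_congr rfl fun k _ => by ring

noncomputable def doubleExpTerm (x t : ℝ) (p : ℕ × ℕ) : ℝ :=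
  x ^ p.1 / p.1 ! * ((2 * p.1 + 1) * t) ^ p.2 / p.2 !

theorem hasSum_doubleExpTerm_row (x t : ℝ) (j : ℕ) :
    HasSum (fun n => doubleExpTerm x t (j, n)) (x ^ j / j ! * Real.exp ((2 * j + 1) * t)) := by
  simpa only [doubleExpTerm, mul_div_assoc] using
    (Real.hasSum_pow_div_factorial _).mul_left (x ^ j / j !)

theorem hasSum_doubleExpTerm_col (x t : ℝ) (n : ℕ) :
    HasSum (fun j => doubleExpTerm x t (j, n))
      (Real.exp x * (∑ k ∈ range (n + 1), (stirlingB2 n k : ℝ) * (2 * x) ^ k) * (t ^ n / n !)) :=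
  ((hasSum_odd_pow_mul_pow_div_factorial n x).mul_right (t ^ n / n !)).congr_fun fun j => by
    simp only [doubleExpTerm, mul_pow]
    ring

theorem hasSum_pow_div_factorial_mul_exp (x t : ℝ) :
    HasSum (fun j : ℕ => x ^ j / j ! * Real.exp ((2 * j + 1) * t))
      (Real.exp t * Real.exp (x * Real.exp (2 * t))) :=
  ((Real.hasSum_pow_div_factorial (x * Real.exp (2 * t))).mul_left (Real.exp t)).congr_fun
    fun j => by
      rw [mul_pow, ← Real.exp_nat_mul, show (2 * j + 1) * t = j * (2 * t) + t by ring,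
        Real.exp_add]
      ring

theorem norm_doubleExpTerm (x t : ℝ) (p : ℕ × ℕ) :
    ‖doubleExpTerm x t p‖ = doubleExpTerm |x| |t| p := by
  simp [doubleExpTerm, abs_of_nonneg (by positivity : (0 : ℝ) ≤ 2 * p.1 + 1)]

theorem summable_doubleExpTerm (x t : ℝ) : Summable (doubleExpTerm x t) := by
  have hnonneg : 0 ≤ doubleExpTerm |x| |t| := fun p => by
    rw [Pi.zero_apply, ← norm_doubleExpTerm]; exact norm_nonneg _
  have habs : Summable (doubleExpTerm |x| |t|) :=
    (summable_prod_of_nonneg hnonneg).2 ⟨fun j => (hasSum_doubleExpTerm_row _ _ j).summable,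
      (hasSum_pow_div_factorial_mul_exp |x| |t|).summable.congr fun j =>
        (hasSum_doubleExpTerm_row _ _ j).tsum_eq.symm⟩
  exact habs.of_norm_bounded fun p => (norm_doubleExpTerm x t p).le

theorem hasSum_doubleExpTerm (x t : ℝ) :
    HasSum (doubleExpTerm x t) (Real.exp t * Real.exp (x * Real.exp (2 * t))) := by
  have h := (summable_doubleExpTerm x t).hasSum
  rwa [(h.prod_fiberwise (hasSum_doubleExpTerm_row x t)).unique
    (hasSum_pow_div_factorial_mul_exp x t)] at h

/-- The exponential generating function identity
`Σ_{k≥0} Σ_{n≥k} S_B(n,k) (t^n/n!) y^k = e^{(y/2)(e^{2t}−1)} · e^t`. -/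
theorem stirlingB2_egf (y t : ℝ) :
    HasSum
      (fun n : ℕ =>
        (∑ k ∈ Finset.range (n + 1), (stirlingB2 n k : ℝ) * y ^ k) * t ^ n / n.factorial)
      (Real.exp (y / 2 * (Real.exp (2 * t) - 1)) * Real.exp t) := by
  set x := y / 2
  have hy : 2 * x = y := by ring
  have hcols := ((Equiv.prodComm ℕ ℕ).hasSum_iff.2 (hasSum_doubleExpTerm x t)).prod_fiberwise
    fun n => hasSum_doubleExpTerm_col x t n
  have hval : Real.exp (x * (Real.exp (2 * t) - 1)) * Real.exp t
      = Real.exp (-x) * (Real.exp t * Real.exp (x * Real.exp (2 * t))) := by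
    rw [Real.exp_neg, mul_sub, mul_one, Real.exp_sub]
    ring
  rw [hval]
  refine (hcols.mul_left _).congr_fun fun n => ?_
  rw [← hy, Real.exp_neg]
  field_simp
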